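/- Let q = 2^r, let G be an additive subgroup of F_q × F_q of order k ≥ 4 such that K = K_G is a k-arc, and let φ be the homology with axis ℓ∞ given by (X1,X2,X3) ↦ (λ·X1 + a1·X3, λ·X2 + a2·X3, X3) with λ ∈ F_q \ {0,1} and a1, a2 ∈ F_q, whose centre does not lie in K. If K ∩ φ(K) = ∅ and K' = K ∪ φ(K) is an arc (of size 2k), then there exists a blocking set of the secants of K' of minimum size 2k − 1 that is not contained in any line. -/

import Mathlib

open Projectivization

abbrev PGPoint (K : Type*) [Field K] := Projectivization K (Fin 3 → K)

lemma vec3_ne_zero_left {K : Type*} [Field K] {a b c : K} (h : a ≠ 0) :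
    ![a, b, c] ≠ 0 := fun hv => h (by simpa using congrFun hv 0)

lemma vec3_ne_zero_right {K : Type*} [Field K] {a b c : K} (h : c ≠ 0) :
    ![a, b, c] ≠ 0 := fun hv => h (by simpa using congrFun hv 2)

/-- The affine point `(a, b, 1)` of `PG(2,q)`. -/
def affPt {K : Type*} [Field K] (a b : K) : PGPoint K :=
  Projectivization.mk K ![a, b, 1] (vec3_ne_zero_right one_ne_zero)

/-- Three points of `PG(2,q)` are collinear if they lie in a common subspace
of projective dimension at most one. -/
def Coll3 {K : Type*} [Field K] (p q r : PGPoint K) : Prop :=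
  ∃ W : Submodule K (Fin 3 → K), Module.finrank K W ≤ 2 ∧
    p.submodule ≤ W ∧ q.submodule ≤ W ∧ r.submodule ≤ W

/-- An arc: a set of points no three of which are collinear. -/
def IsArc {K : Type*} [Field K] (S : Set (PGPoint K)) : Prop :=
  ∀ p ∈ S, ∀ q ∈ S, ∀ r ∈ S, p ≠ q → p ≠ r → q ≠ r → ¬ Coll3 p q r

/-- `B` is a blocking set of the secants of `S`. -/
def BlocksSecants {K : Type*} [Field K] (S B : Set (PGPoint K)) : Prop :=
  (∀ b ∈ B, b ∉ S) ∧ ∀ p ∈ S, ∀ q ∈ S, p ≠ q → ∃ b ∈ B, Coll3 p q b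

/-- Lines of `PG(2,q)` as point sets. -/
def IsLine {K : Type*} [Field K] (L : Set (PGPoint K)) : Prop :=
  ∃ W : Submodule K (Fin 3 → K), Module.finrank K W = 2 ∧
    L = {x : PGPoint K | x.submodule ≤ W}

/-- The line `ℓ∞ : X₃ = 0`. -/
def lInf (K : Type*) [Field K] : Set (PGPoint K) := {x : PGPoint K | x.rep 2 = 0}

/-- The point set `K_G = {(a, b, 1) : (a,b) ∈ G}`. -/
def KG {K : Type*} [Field K] (G : Set (K × K)) : Set (PGPoint K) :=
  (fun A : K × K => affPt A.1 A.2) '' G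

/-- The linear map underlying the elation `φ_A`, `A = (a₁, a₂)`. -/
def elationLin (K : Type*) [Field K] (a1 a2 : K) : (Fin 3 → K) →ₗ[K] (Fin 3 → K) where
  toFun v := ![v 0 + a1 * v 2, v 1 + a2 * v 2, v 2]
  map_add' u v := by funext i; fin_cases i <;> simp <;> ring
  map_smul' c v := by funext i; fin_cases i <;> simp <;> ring

lemma elationLin_injective {K : Type*} [Field K] (a1 a2 : K) :
    Function.Injective (elationLin K a1 a2) := by
  intro u v h
  have h0 := congrFun h 0
  have h1 := congrFun h 1
  have h2 := congrFun h 2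
  simp [elationLin] at h0 h1 h2
  rw [h2] at h0 h1
  have e0 : u 0 = v 0 := add_right_cancel h0
  have e1 : u 1 = v 1 := add_right_cancel h1
  funext i
  fin_cases i <;> assumption

/-- The elation `φ_A : (X₁,X₂,X₃) ↦ (X₁+a₁X₃, X₂+a₂X₃, X₃)` as a map on `PG(2,q)`. -/
def elation {K : Type*} [Field K] (a1 a2 : K) : PGPoint K → PGPoint K :=
  Projectivization.map (elationLin K a1 a2) (elationLin_injective a1 a2)

/-- The linear map underlying the homology
`(X₁,X₂,X₃) ↦ (λX₁+a₁X₃, λX₂+a₂X₃, X₃)`. -/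
def homologyLin (K : Type*) [Field K] (l a1 a2 : K) : (Fin 3 → K) →ₗ[K] (Fin 3 → K) where
  toFun v := ![l * v 0 + a1 * v 2, l * v 1 + a2 * v 2, v 2]
  map_add' u v := by funext i; fin_cases i <;> simp <;> ring
  map_smul' c v := by funext i; fin_cases i <;> simp <;> ring

lemma homologyLin_injective {K : Type*} [Field K] {l : K} (hl : l ≠ 0) (a1 a2 : K) :
    Function.Injective (homologyLin K l a1 a2) := by
  intro u v h
  have h0 := congrFun h 0
  have h1 := congrFun h 1
  have h2 := congrFun h 2
  simp [homologyLin] at h0 h1 h2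
  rw [h2] at h0 h1
  have e0 : u 0 = v 0 := mul_left_cancel₀ hl (add_right_cancel h0)
  have e1 : u 1 = v 1 := mul_left_cancel₀ hl (add_right_cancel h1)
  funext i
  fin_cases i <;> assumption

/-- The homology with axis `ℓ∞` as a map on `PG(2,q)`. -/
def homology {K : Type*} [Field K] {l : K} (hl : l ≠ 0) (a1 a2 : K) :
    PGPoint K → PGPoint K :=
  Projectivization.map (homologyLin K l a1 a2) (homologyLin_injective hl a1 a2)

lemma one_add_ne_zero {K : Type*} [Field K] [CharP K 2] {l : K} (h : l ≠ 1) :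
    1 + l ≠ 0 := by
  intro h0
  apply h
  have : l = -1 := by linear_combination h0
  rw [this, CharTwo.neg_eq]

lemma add_one_ne_zero' {K : Type*} [Field K] [CharP K 2] {l : K} (h : l ≠ 1) :
    l + 1 ≠ 0 := by rw [add_comm]; exact one_add_ne_zero h

lemma vec3_ne_zero_mid {K : Type*} [Field K] {a b c : K} (h : b ≠ 0) :
    ![a, b, c] ≠ 0 := fun hv => h (by simpa using congrFun hv 1)

lemma vec3_ne_zero_pair {K : Type*} [Field K] {A : K × K} (h : A ≠ (0, 0)) :
    ![A.1, A.2, 0] ≠ 0 := by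
  intro hv
  apply h
  have h0 := congrFun hv 0
  have h1 := congrFun hv 1
  simp at h0 h1
  exact Prod.ext h0 h1


/-!
A secant `ĀB̄` of `K_G` meets `ℓ∞` in the direction of `A - B ∈ G`, and so does `φ(Ā)φ(B̄)`,
because a homology with axis `ℓ∞` fixes `ℓ∞` pointwise. A mixed secant `Āφ(B̄)` contains the
point `λĀ - φ(B̄) = (λ(A - B) - a, λ - 1)`, which also depends only on `A - B ∈ G`. Hence the
`k - 1` directions of `G \ {0}` together with the `k` points `(λC - a, λ - 1)`, `C ∈ G`, block
all secants of `K'`. None of these points lies on `K'`: the directions are at infinity, and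
`(λC - a, λ - 1)` lies on the secant `C̄φ(0̄)` of the arc `K'` without being one of its two
points, because `C̄ ≠ φ(0̄)`. Two points at infinity and one affine point are not collinear.
-/

section ProjectivePlane

variable {K : Type*} [Field K]

lemma mk3_eq_mk3_iff {x₁ x₂ x₃ y₁ y₂ y₃ : K} (hx : ![x₁, x₂, x₃] ≠ 0) (hy : ![y₁, y₂, y₃] ≠ 0) :
    mk K ![x₁, x₂, x₃] hx = mk K ![y₁, y₂, y₃] hy ↔
      ∃ μ : K, x₁ = μ * y₁ ∧ x₂ = μ * y₂ ∧ x₃ = μ * y₃ := by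
  simp [mk_eq_mk_iff', funext_iff, Fin.forall_fin_succ, eq_comm]

lemma mk3_ne_mk3_zero_of_ne_zero {x₁ x₂ y₁ y₂ y₃ : K} (hx : ![x₁, x₂, 0] ≠ 0)
    (hy : ![y₁, y₂, y₃] ≠ 0) (h : y₃ ≠ 0) : mk K ![y₁, y₂, y₃] hy ≠ mk K ![x₁, x₂, 0] hx := by
  rw [Ne, mk3_eq_mk3_iff]
  rintro ⟨μ, -, -, h₃⟩
  exact h (by simpa using h₃)

lemma coll3_mk_of_mem_span_pair {u v w : Fin 3 → K} (hu : u ≠ 0) (hv : v ≠ 0) (hw : w ≠ 0)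
    (h : w ∈ Submodule.span K {u, v}) : Coll3 (mk K u hu) (mk K v hv) (mk K w hw) := by
  refine ⟨Submodule.span K {u, v}, ?_, ?_, ?_, ?_⟩
  · classical
    calc Module.finrank K (Submodule.span K {u, v})
        ≤ ({u, v} : Set (Fin 3 → K)).toFinset.card := finrank_span_le_card _
      _ ≤ 2 := by simpa using Finset.card_le_two
  all_goals rw [submodule_mk, Submodule.span_singleton_le_iff_mem]
  · exact Submodule.subset_span (by simp)
  · exact Submodule.subset_span (by simp)
  · exact h

lemma mem_span_pair_of_coll3 {u v w : Fin 3 → K} (hu : u ≠ 0) (hv : v ≠ 0) (hw : w ≠ 0)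
    (huv : mk K u hu ≠ mk K v hv) (h : Coll3 (mk K u hu) (mk K v hv) (mk K w hw)) :
    w ∈ Submodule.span K {u, v} := by
  obtain ⟨W, hW, hu', hv', hw'⟩ := h
  simp only [submodule_mk, Submodule.span_singleton_le_iff_mem] at hu' hv' hw'
  have hind : LinearIndependent K ![u, v] := by
    rwa [← independent_mk_iff_LinearIndependent hu hv, independent_pair_iff_ne]
  have hspan : Submodule.span K {u, v} = W := by
    refine Submodule.eq_of_le_of_finrank_le (Submodule.span_le.mpr ?_) ?_
    · rintro x (rfl | rfl | -) <;> assumption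
    · rw [← Matrix.range_cons_cons_empty u v ![]]
      simpa [finrank_span_eq_card hind] using hW
  rwa [hspan]

lemma Coll3.swap {p q r : PGPoint K} (h : Coll3 p q r) : Coll3 q p r :=
  let ⟨W, hW, hp, hq, hr⟩ := h
  ⟨W, hW, hq, hp, hr⟩

lemma IsLine.coll3 {L : Set (PGPoint K)} (hL : IsLine L) {p q r : PGPoint K} (hp : p ∈ L)
    (hq : q ∈ L) (hr : r ∈ L) : Coll3 p q r := by
  obtain ⟨W, hW, rfl⟩ := hL
  exact ⟨W, hW.le, hp, hq, hr⟩

lemma affPt_eq_affPt_iff {x y x' y' : K} : affPt x y = affPt x' y' ↔ x = x' ∧ y = y' := by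
  simp [affPt, mk3_eq_mk3_iff]

lemma homology_affPt {l : K} (hl : l ≠ 0) (a₁ a₂ x y : K) :
    homology hl a₁ a₂ (affPt x y) = affPt (l * x + a₁) (l * y + a₂) := by
  simp [homology, affPt, map_mk, homologyLin]

end ProjectivePlane

section DoublingBlockingSet

variable {K : Type*} [Field K]

open scoped Classical in
/-- `C = 0` has no direction; the junk value `(0, 0, 1)` keeps `dirPt` total. -/
noncomputable def dirPt (C : K × K) : PGPoint K :=
  mk K ![C.1, C.2, if C = 0 then 1 else 0] (by
    split_ifs with h
    · exact vec3_ne_zero_right one_ne_zero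
    · exact vec3_ne_zero_pair h)

lemma dirPt_of_ne_zero {C : K × K} (hC : C ≠ 0) :
    dirPt C = mk K ![C.1, C.2, 0] (vec3_ne_zero_pair hC) := by
  simp [dirPt, hC]

/-- The point `λĀ - φ(B̄)` of the secant `Āφ(B̄)`, where `C = A - B`. -/
def crossPt {l : K} (hl : l ≠ 1) (a₁ a₂ : K) (C : K × K) : PGPoint K :=
  mk K ![l * C.1 - a₁, l * C.2 - a₂, l - 1] (vec3_ne_zero_right (sub_ne_zero.mpr hl))

lemma affPt_ne_dirPt (x y : K) {C : K × K} (hC : C ≠ 0) : affPt x y ≠ dirPt C := by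
  rw [affPt, dirPt_of_ne_zero hC]
  exact mk3_ne_mk3_zero_of_ne_zero _ _ one_ne_zero

lemma crossPt_ne_dirPt {l : K} (hl : l ≠ 1) (a₁ a₂ : K) (C : K × K) {D : K × K} (hD : D ≠ 0) :
    crossPt hl a₁ a₂ C ≠ dirPt D := by
  rw [crossPt, dirPt_of_ne_zero hD]
  exact mk3_ne_mk3_zero_of_ne_zero _ _ (sub_ne_zero.mpr hl)

lemma coll3_affPt_affPt_dirPt {A B : K × K} (h : A ≠ B) :
    Coll3 (affPt A.1 A.2) (affPt B.1 B.2) (dirPt (A - B)) := by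
  rw [affPt, affPt, dirPt_of_ne_zero (sub_ne_zero.mpr h)]
  refine coll3_mk_of_mem_span_pair _ _ _ (Submodule.mem_span_pair.mpr ⟨1, -1, ?_⟩)
  funext i
  fin_cases i <;> simp <;> ring

lemma coll3_homology_homology_dirPt {l : K} (hl : l ≠ 0) (a₁ a₂ : K) {A B : K × K}
    (h : A ≠ B) :
    Coll3 (homology hl a₁ a₂ (affPt A.1 A.2)) (homology hl a₁ a₂ (affPt B.1 B.2))
      (dirPt (A - B)) := by
  rw [homology_affPt, homology_affPt, affPt, affPt, dirPt_of_ne_zero (sub_ne_zero.mpr h)]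
  refine coll3_mk_of_mem_span_pair _ _ _ (Submodule.mem_span_pair.mpr ⟨l⁻¹, -l⁻¹, ?_⟩)
  funext i
  fin_cases i <;> simp <;> field_simp <;> ring

lemma coll3_affPt_homology_crossPt {l : K} (hl₀ : l ≠ 0) (hl₁ : l ≠ 1) (a₁ a₂ : K)
    (A B : K × K) :
    Coll3 (affPt A.1 A.2) (homology hl₀ a₁ a₂ (affPt B.1 B.2)) (crossPt hl₁ a₁ a₂ (A - B)) := by
  rw [homology_affPt, affPt, affPt, crossPt]
  refine coll3_mk_of_mem_span_pair _ _ _ (Submodule.mem_span_pair.mpr ⟨l, -1, ?_⟩)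
  funext i
  fin_cases i <;> simp <;> ring

lemma injOn_dirPt_of_isArc {G : AddSubgroup (K × K)} (hG : IsArc (KG (G : Set (K × K)))) :
    Set.InjOn dirPt ((G : Set (K × K)) \ {0}) := by
  rintro C ⟨hCG, hC0 : C ≠ 0⟩ D ⟨hDG, hD0 : D ≠ 0⟩ hCD
  by_contra hne
  rw [dirPt_of_ne_zero hC0, dirPt_of_ne_zero hD0, mk3_eq_mk3_iff] at hCD
  obtain ⟨μ, h₁, h₂, -⟩ := hCD
  -- `C = μD` puts `C̄` on the line joining `0̄` and `D̄`
  have hcoll : Coll3 (affPt (0 : K) 0) (affPt D.1 D.2) (affPt C.1 C.2) := by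
    refine coll3_mk_of_mem_span_pair _ _ _ (Submodule.mem_span_pair.mpr ⟨1 - μ, μ, ?_⟩)
    funext i
    fin_cases i <;> simp [h₁, h₂]
  refine hG _ ⟨0, G.zero_mem, rfl⟩ _ ⟨D, hDG, rfl⟩ _ ⟨C, hCG, rfl⟩ ?_ ?_ ?_ hcoll <;>
    simp only [Ne, affPt_eq_affPt_iff]
  · exact fun h => hD0 (Prod.ext h.1.symm h.2.symm)
  · exact fun h => hC0 (Prod.ext h.1.symm h.2.symm)
  · exact fun h => hne (Prod.ext h.1 h.2).symm

lemma crossPt_injective {l : K} (hl₀ : l ≠ 0) (hl₁ : l ≠ 1) (a₁ a₂ : K) :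
    Function.Injective (crossPt hl₁ a₁ a₂) := by
  intro C D h
  obtain ⟨μ, h₁, h₂, h₃⟩ := (mk3_eq_mk3_iff _ _).mp h
  obtain rfl : μ = 1 := by
    simpa using mul_right_cancel₀ (sub_ne_zero.mpr hl₁) (h₃.symm.trans (one_mul _).symm)
  simp only [one_mul, sub_left_inj, mul_right_inj' hl₀] at h₁ h₂
  exact Prod.ext h₁ h₂

lemma eq_of_crossPt_eq_affPt_self {l : K} (hl₁ : l ≠ 1) {a₁ a₂ : K} {C : K × K}
    (h : crossPt hl₁ a₁ a₂ C = affPt C.1 C.2) : C = (a₁, a₂) := by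
  obtain ⟨μ, h₁, h₂, h₃⟩ := (mk3_eq_mk3_iff _ _).mp h
  rw [mul_one] at h₃
  subst h₃
  exact Prod.ext (by linear_combination h₁) (by linear_combination h₂)

lemma eq_of_crossPt_eq_affPt_shift {l : K} (hl₀ : l ≠ 0) (hl₁ : l ≠ 1) {a₁ a₂ : K}
    {C : K × K} (h : crossPt hl₁ a₁ a₂ C = affPt a₁ a₂) : C = (a₁, a₂) := by
  obtain ⟨μ, h₁, h₂, h₃⟩ := (mk3_eq_mk3_iff _ _).mp h
  rw [mul_one] at h₃
  subst h₃
  exact Prod.ext (mul_left_cancel₀ hl₀ (by linear_combination h₁))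
    (mul_left_cancel₀ hl₀ (by linear_combination h₂))

lemma not_coll3_dirPt_dirPt_crossPt {l : K} (hl : l ≠ 1) (a₁ a₂ : K) {C D : K × K} (hC : C ≠ 0)
    (hD : D ≠ 0) (hCD : dirPt C ≠ dirPt D) (E : K × K) :
    ¬ Coll3 (dirPt C) (dirPt D) (crossPt hl a₁ a₂ E) := by
  rw [dirPt_of_ne_zero hC, dirPt_of_ne_zero hD] at hCD ⊢
  intro h
  obtain ⟨s, t, hst⟩ := Submodule.mem_span_pair.mp (mem_span_pair_of_coll3 _ _ _ hCD h)
  have h₃ := congrFun hst 2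
  simp only [Pi.add_apply, Pi.smul_apply, Matrix.cons_val, smul_eq_mul, mul_zero,
    add_zero] at h₃
  exact sub_ne_zero.mpr hl h₃.symm

lemma crossPt_notMem_of_isArc {G : AddSubgroup (K × K)} {l : K} (hl₀ : l ≠ 0) (hl₁ : l ≠ 1)
    {a₁ a₂ : K}
    (hdisj : KG (G : Set (K × K)) ∩ homology hl₀ a₁ a₂ '' KG (G : Set (K × K)) = ∅)
    (harc : IsArc (KG (G : Set (K × K)) ∪ homology hl₀ a₁ a₂ '' KG (G : Set (K × K))))
    {C : K × K} (hC : C ∈ G) :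
    crossPt hl₁ a₁ a₂ C ∉ KG (G : Set (K × K)) ∪ homology hl₀ a₁ a₂ '' KG (G : Set (K × K)) := by
  intro hmem
  have hφ₀ : homology hl₀ a₁ a₂ (affPt 0 0) = affPt a₁ a₂ := by simp [homology_affPt]
  have hφ₀_mem : affPt a₁ a₂ ∈ homology hl₀ a₁ a₂ '' KG (G : Set (K × K)) :=
    ⟨_, ⟨0, G.zero_mem, rfl⟩, hφ₀⟩
  have hCa : C ≠ (a₁, a₂) := by
    rintro rfl
    exact (Set.eq_empty_iff_forall_notMem.mp hdisj) _ ⟨⟨_, hC, rfl⟩, hφ₀_mem⟩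
  have hcoll := coll3_affPt_homology_crossPt hl₀ hl₁ a₁ a₂ C 0
  simp only [sub_zero, Prod.fst_zero, Prod.snd_zero, hφ₀] at hcoll
  refine harc _ (Or.inl ⟨C, hC, rfl⟩) _ (Or.inr hφ₀_mem) _ hmem ?_ ?_ ?_ hcoll
  · exact fun h => hCa (Prod.ext (affPt_eq_affPt_iff.mp h).1 (affPt_eq_affPt_iff.mp h).2)
  · exact fun h => hCa (eq_of_crossPt_eq_affPt_self hl₁ h.symm)
  · exact fun h => hCa (eq_of_crossPt_eq_affPt_shift hl₀ hl₁ h.symm)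

noncomputable def doublingBlockingSet (G : AddSubgroup (K × K)) {l : K} (hl : l ≠ 1)
    (a₁ a₂ : K) : Set (PGPoint K) :=
  dirPt '' ((G : Set (K × K)) \ {0}) ∪ crossPt hl a₁ a₂ '' G

lemma blocksSecants_doublingBlockingSet {G : AddSubgroup (K × K)} {l : K} (hl₀ : l ≠ 0)
    (hl₁ : l ≠ 1) {a₁ a₂ : K}
    (hdisj : KG (G : Set (K × K)) ∩ homology hl₀ a₁ a₂ '' KG (G : Set (K × K)) = ∅)
    (harc : IsArc (KG (G : Set (K × K)) ∪ homology hl₀ a₁ a₂ '' KG (G : Set (K × K)))) :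
    BlocksSecants (KG (G : Set (K × K)) ∪ homology hl₀ a₁ a₂ '' KG (G : Set (K × K)))
      (doublingBlockingSet G hl₁ a₁ a₂) := by
  constructor
  · rintro b (⟨C, ⟨-, hC₀⟩, rfl⟩ | ⟨C, hC, rfl⟩)
    · rintro (⟨A, -, hA⟩ | ⟨-, ⟨A, -, rfl⟩, hA⟩)
      · exact affPt_ne_dirPt _ _ hC₀ hA
      · rw [homology_affPt] at hA
        exact affPt_ne_dirPt _ _ hC₀ hA
    · exact crossPt_notMem_of_isArc hl₀ hl₁ hdisj harc hC
  · rintro p (⟨A, hA, rfl⟩ | ⟨-, ⟨A, hA, rfl⟩, rfl⟩) q (⟨B, hB, rfl⟩ | ⟨-, ⟨B, hB, rfl⟩, rfl⟩) hpq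
    · have hAB : A ≠ B := by rintro rfl; exact hpq rfl
      exact ⟨_, Or.inl ⟨A - B, ⟨G.sub_mem hA hB, sub_ne_zero.mpr hAB⟩, rfl⟩,
        coll3_affPt_affPt_dirPt hAB⟩
    · exact ⟨_, Or.inr ⟨A - B, G.sub_mem hA hB, rfl⟩,
        coll3_affPt_homology_crossPt hl₀ hl₁ a₁ a₂ A B⟩
    · exact ⟨_, Or.inr ⟨B - A, G.sub_mem hB hA, rfl⟩,
        (coll3_affPt_homology_crossPt hl₀ hl₁ a₁ a₂ B A).swap⟩
    · have hAB : A ≠ B := by rintro rfl; exact hpq rfl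
      exact ⟨_, Or.inl ⟨A - B, ⟨G.sub_mem hA hB, sub_ne_zero.mpr hAB⟩, rfl⟩,
        coll3_homology_homology_dirPt hl₀ a₁ a₂ hAB⟩

lemma ncard_doublingBlockingSet {G : AddSubgroup (K × K)} (hfin : (G : Set (K × K)).Finite)
    (harc : IsArc (KG (G : Set (K × K)))) {l : K} (hl₀ : l ≠ 0) (hl₁ : l ≠ 1) (a₁ a₂ : K) :
    (doublingBlockingSet G hl₁ a₁ a₂).ncard = 2 * (G : Set (K × K)).ncard - 1 := by
  have hdisj : Disjoint (dirPt '' ((G : Set (K × K)) \ {0})) (crossPt hl₁ a₁ a₂ '' G) := by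
    rw [Set.disjoint_left]
    rintro _ ⟨C, ⟨-, hC₀⟩, rfl⟩ ⟨D, -, hD⟩
    exact crossPt_ne_dirPt hl₁ a₁ a₂ D hC₀ hD
  have hpos : 0 < (G : Set (K × K)).ncard := (Set.ncard_pos hfin).mpr ⟨0, G.zero_mem⟩
  rw [doublingBlockingSet, Set.ncard_union_eq hdisj (hfin.sdiff.image _) (hfin.image _),
    (injOn_dirPt_of_isArc harc).ncard_image,
    Set.ncard_sdiff_singleton_of_mem G.zero_mem,
    Set.ncard_image_of_injective _ (crossPt_injective hl₀ hl₁ a₁ a₂)]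
  omega

lemma not_subset_line_doublingBlockingSet {G : AddSubgroup (K × K)}
    (harc : IsArc (KG (G : Set (K × K)))) (hG : 1 < ((G : Set (K × K)) \ {0}).ncard) {l : K}
    (hl : l ≠ 1) (a₁ a₂ : K) :
    ¬ ∃ L : Set (PGPoint K), IsLine L ∧ doublingBlockingSet G hl a₁ a₂ ⊆ L := by
  rintro ⟨L, hL, hBL⟩
  obtain ⟨C, hC, D, hD, hCD⟩ := (Set.one_lt_ncard (Set.finite_of_ncard_pos (by omega))).mp hG
  exact not_coll3_dirPt_dirPt_crossPt hl a₁ a₂ hC.2 hD.2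
    (fun h => hCD (injOn_dirPt_of_isArc harc hC hD h)) 0
    (hL.coll3 (hBL (Or.inl ⟨C, hC, rfl⟩)) (hBL (Or.inl ⟨D, hD, rfl⟩))
      (hBL (Or.inr ⟨0, G.zero_mem, rfl⟩)))

end DoublingBlockingSet

theorem doubling_by_homology_gives_nonlinear_blocking_set_general
    {K : Type*} [Field K]
    (G : AddSubgroup (K × K)) (k : ℕ) (hk4 : 4 ≤ k) (hk : Nat.card G = k)
    (harc : IsArc (KG (G : Set (K × K))))
    (l a1 a2 : K) (hl0 : l ≠ 0) (hl1 : l ≠ 1)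
    (hdisj : KG (G : Set (K × K)) ∩ homology hl0 a1 a2 '' KG (G : Set (K × K)) = ∅)
    (harc' : IsArc (KG (G : Set (K × K)) ∪ homology hl0 a1 a2 '' KG (G : Set (K × K)))) :
    ∃ B : Set (PGPoint K),
      BlocksSecants (KG (G : Set (K × K)) ∪ homology hl0 a1 a2 '' KG (G : Set (K × K))) B ∧
      B.ncard = 2 * k - 1 ∧
      ¬ ∃ L : Set (PGPoint K), IsLine L ∧ B ⊆ L := by
  have hGk : (G : Set (K × K)).ncard = k := by rwa [← Nat.card_coe_set_eq]
  have hGfin : (G : Set (K × K)).Finite := Set.finite_of_ncard_pos (by omega)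
  have hG₀ : 1 < ((G : Set (K × K)) \ {0}).ncard := by
    rw [Set.ncard_sdiff_singleton_of_mem G.zero_mem]
    omega
  refine ⟨doublingBlockingSet G hl1 a1 a2, blocksSecants_doublingBlockingSet hl0 hl1 hdisj harc',
    ?_, not_subset_line_doublingBlockingSet harc hG₀ hl1 a1 a2⟩
  rw [ncard_doublingBlockingSet hGfin harc hl0 hl1, hGk]

/-- if `K = K_G` is a translation `k`-arc, `k ≥ 4`, `φ` is a
homology with axis `ℓ∞` whose centre `(a₁, a₂, λ+1)` is not in `K`, and
`K' = K ∪ φ(K)` is a `2k`-arc, then the secants of `K'` admit a blocking set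
of minimum size `2k - 1` not contained in any line. -/
theorem doubling_by_homology_gives_nonlinear_blocking_set
    {r : ℕ} (hr : 1 ≤ r) {K : Type*} [Field K] [Fintype K] [CharP K 2]
    (hq : Fintype.card K = 2 ^ r)
    (G : AddSubgroup (K × K)) (k : ℕ) (hk4 : 4 ≤ k) (hk : Nat.card G = k)
    (harc : IsArc (KG (G : Set (K × K))))
    (l a1 a2 : K) (hl0 : l ≠ 0) (hl1 : l ≠ 1)
    (hcentre : Projectivization.mk K ![a1, a2, l + 1]
        (vec3_ne_zero_right (add_one_ne_zero' hl1)) ∉ KG (G : Set (K × K)))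
    (hdisj : KG (G : Set (K × K)) ∩ homology hl0 a1 a2 '' KG (G : Set (K × K)) = ∅)
    (harc' : IsArc (KG (G : Set (K × K)) ∪ homology hl0 a1 a2 '' KG (G : Set (K × K)))) :
    ∃ B : Set (PGPoint K),
      BlocksSecants (KG (G : Set (K × K)) ∪ homology hl0 a1 a2 '' KG (G : Set (K × K))) B ∧
      B.ncard = 2 * k - 1 ∧
      ¬ ∃ L : Set (PGPoint K), IsLine L ∧ B ⊆ L :=
  doubling_by_homology_gives_nonlinear_blocking_set_general G k hk4 hk harc l a1 a2 hl0 hl1 hdisj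
    harc'
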